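/- arXiv:2604.12641 — 5 statements merged into one kernel-verified Lean document; each statement's English description precedes it below -/
import Mathlib

section
/- Let P be a finite poset and let F ⊆ [t]^n be an induced P-free, induced P-saturated family. Suppose there exist coordinates i < i' in {1,...,n} such that f(i) = f(i') for all f ∈ F. Then L_i(F) ⊆ [t]^{n+1} is induced P-free and induced P-saturated. -/
open Filter

/-- An induced copy of the poset `P` inside the family `F`. -/
def InducedCopy (P : Type) [PartialOrder P] {α : Type} [PartialOrder α]
    (F : Set α) : Prop :=
  ∃ φ : P → α, Function.Injective φ ∧ (∀ x, φ x ∈ F) ∧ ∀ x y, φ x ≤ φ y ↔ x ≤ y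

/-- `F` is induced `P`-free. -/
def PFree (P : Type) [PartialOrder P] {α : Type} [PartialOrder α] (F : Set α) : Prop :=
  ¬ InducedCopy P F

/-- `F` is induced `P`-free and induced `P`-saturated. -/
def PSaturated (P : Type) [PartialOrder P] {α : Type} [PartialOrder α] (F : Set α) : Prop :=
  PFree P F ∧ ∀ g ∉ F, InducedCopy P (insert g F)

/-- The lifting operator `L_i`, copying coordinate `i` into a new last coordinate. -/
def lift {t n : ℕ} (i : Fin n) (f : Fin n → Fin t) : Fin (n + 1) → Fin t :=
  Fin.snoc f (f i)

/-- The coordinate-dropping operator `D_i`. -/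
def drop {t n : ℕ} (i : Fin (n + 1)) (f : Fin (n + 1) → Fin t) : Fin n → Fin t :=
  fun x => f (i.succAbove x)

/-- Coordinate `i` is separating for `F`. -/
def Separating {t n : ℕ} (F : Set (Fin n → Fin t)) (i : Fin n) : Prop :=
  ∃ f ∈ F, ∃ f' ∈ F, f ≠ f' ∧ (∀ x, x ≠ i → f x ≤ f' x) ∧ f' i < f i

/-- The induced saturation number `sat*([t]^n, P)`. -/
noncomputable def satStar (t n : ℕ) (P : Type) [PartialOrder P] : ℕ :=
  sInf {m | ∃ F : Set (Fin n → Fin t), PSaturated P F ∧ F.ncard = m}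

/-- The antichain on `k` elements. -/
def AC (k : ℕ) := Fin k

instance (k : ℕ) : PartialOrder (AC k) where
  le := Eq
  le_refl _ := rfl
  le_trans _ _ _ h h' := Eq.trans h h'
  le_antisymm _ _ h _ := h

/-- The unique cover twin property. -/
def UCTP (P : Type) [PartialOrder P] : Prop :=
  ∀ x y : P, y ⋖ x → ∃ y', y' ≠ y ∧ y' ≠ x ∧ y' ⋖ x

lemma lift_le_lift {t n : ℕ} (i : Fin n) (f g : Fin n → Fin t) :
    lift i f ≤ lift i g ↔ f ≤ g := by
  constructor
  · intro hle j
    have := hle j.castSucc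
    simpa [lift] using this
  · intro hle j
    refine Fin.lastCases ?_ (fun j => ?_) j
    · simpa [lift] using hle i
    · simpa [lift] using hle j

lemma lift_inj {t n : ℕ} (i : Fin n) : Function.Injective (lift (t := t) i) := by
  intro f g hfg
  funext j
  have := congrFun hfg j.castSucc
  simpa [lift] using this

theorem stmt1 (t n : ℕ) (P : Type) [PartialOrder P] [Finite P]
    (F : Set (Fin n → Fin t)) (hsat : PSaturated P F)
    (i i' : Fin n) (hii' : i < i') (hconst : ∀ f ∈ F, f i = f i') :
    PSaturated P (lift i '' F) := by
  obtain ⟨hfree, hsatn⟩ := hsat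
  have hne : i ≠ i' := ne_of_lt hii'
  constructor
  · rintro ⟨φ, hinj, hmem, hord⟩
    apply hfree
    choose f hf hfe using hmem
    refine ⟨f, ?_, hf, ?_⟩
    · intro x y hxy
      apply hinj
      rw [← hfe, ← hfe, hxy]
    · intro x y
      rw [← hord x y, ← hfe x, ← hfe y]
      exact (lift_le_lift i _ _).symm
  · intro g hg
    set m := min (min (g i.castSucc) (g i'.castSucc)) (g (Fin.last n)) with hm
    set M := max (max (g i.castSucc) (g i'.castSucc)) (g (Fin.last n)) with hM
    set h : Fin n → Fin t :=
      fun j => if j = i then m else if j = i' then M else g j.castSucc with hh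
    have keyA : ∀ f ∈ F, (f ≤ h ↔ lift i f ≤ g) := by
      intro f hf
      have hc := hconst f hf
      constructor
      · intro hle
        have hi : f i ≤ m := by simpa [hh, hne] using hle i
        rw [hm, le_min_iff, le_min_iff] at hi
        intro j
        refine Fin.lastCases ?_ (fun j => ?_) j
        · rw [lift, Fin.snoc_last]; exact hi.2
        · rw [lift, Fin.snoc_castSucc]
          by_cases hji : j = i
          · subst hji; exact hi.1.1
          · by_cases hji' : j = i'
            · subst hji'; rw [← hc]; exact hi.1.2
            · simpa [hh, hji, hji'] using hle j
      · intro hle j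
        by_cases hji : j = i
        · subst hji
          have h1 := hle j.castSucc
          have h2 := hle i'.castSucc
          have h3 := hle (Fin.last n)
          rw [lift, Fin.snoc_castSucc] at h1 h2
          rw [lift, Fin.snoc_last] at h3
          simp only [hh, if_pos rfl, hm, le_min_iff]
          exact ⟨⟨h1, hc ▸ h2⟩, h3⟩
        · by_cases hji' : j = i'
          · subst hji'
            have h2 := hle j.castSucc
            rw [lift, Fin.snoc_castSucc] at h2
            simp only [hh, if_neg hji, if_pos rfl, hM, eq_self_iff_true, if_true]
            exact le_max_of_le_left (le_max_of_le_right h2)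
          · have := hle j.castSucc
            rw [lift, Fin.snoc_castSucc] at this
            simpa [hh, hji, hji'] using this
    have keyB : ∀ f ∈ F, (h ≤ f ↔ g ≤ lift i f) := by
      intro f hf
      have hc := hconst f hf
      constructor
      · intro hle
        have hi : M ≤ f i := by
          have := hle i'
          simpa [hh, hne.symm, ← hc] using this
        rw [hM, max_le_iff, max_le_iff] at hi
        intro j
        refine Fin.lastCases ?_ (fun j => ?_) j
        · rw [lift, Fin.snoc_last]; exact hi.2
        · rw [lift, Fin.snoc_castSucc]
          by_cases hji : j = i
          · subst hji; exact hi.1.1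
          · by_cases hji' : j = i'
            · subst hji'; rw [← hc]; exact hi.1.2
            · simpa [hh, hji, hji'] using hle j
      · intro hle j
        by_cases hji : j = i
        · subst hji
          have h1 := hle j.castSucc
          rw [lift, Fin.snoc_castSucc] at h1
          simp only [hh, if_pos rfl, hm]
          exact min_le_of_left_le (min_le_of_left_le h1)
        · by_cases hji' : j = i'
          · subst hji'
            have h1 := hle i.castSucc
            have h2 := hle j.castSucc
            have h3 := hle (Fin.last n)
            rw [lift, Fin.snoc_castSucc] at h1 h2
            rw [lift, Fin.snoc_last] at h3
            simp only [hh, if_neg hji, if_pos rfl, hM, max_le_iff, eq_self_iff_true, if_true]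
            exact ⟨⟨hc ▸ h1, h2⟩, hc ▸ h3⟩
          · have := hle j.castSucc
            rw [lift, Fin.snoc_castSucc] at this
            simpa [hh, hji, hji'] using this
    have hnF : h ∉ F := by
      intro hhF
      apply hg
      have h1 : lift i h ≤ g := (keyA h hhF).mp le_rfl
      have h2 : g ≤ lift i h := (keyB h hhF).mp le_rfl
      exact ⟨h, hhF, le_antisymm h1 h2⟩
    obtain ⟨φ, hinj, hmem, hord⟩ := hsatn h hnF
    refine ⟨fun x => if φ x = h then g else lift i (φ x), ?_, ?_, ?_⟩
    · intro x y hxy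
      simp only [] at hxy
      by_cases hx : φ x = h <;> by_cases hy : φ y = h
      · exact hinj (hx.trans hy.symm)
      · rw [if_pos hx, if_neg hy] at hxy
        exact absurd ⟨φ y, (hmem y).resolve_left hy, hxy.symm⟩ hg
      · rw [if_neg hx, if_pos hy] at hxy
        exact absurd ⟨φ x, (hmem x).resolve_left hx, hxy⟩ hg
      · rw [if_neg hx, if_neg hy] at hxy
        exact hinj (lift_inj i hxy)
    · intro x
      by_cases hx : φ x = h
      · simp [hx]
      · exact Set.mem_insert_iff.mpr (Or.inr ⟨φ x, (hmem x).resolve_left hx, by simp [hx]⟩)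
    · intro x y
      simp only []
      rw [← hord x y]
      by_cases hx : φ x = h <;> by_cases hy : φ y = h
      · simp [hx, hy]
      · have hyF := (hmem y).resolve_left hy
        simp only [if_pos hx, if_neg hy, hx]
        exact (keyB (φ y) hyF).symm
      · have hxF := (hmem x).resolve_left hx
        simp only [if_neg hx, if_pos hy, hy]
        exact (keyA (φ x) hxF).symm
      · have hxF := (hmem x).resolve_left hx
        have hyF := (hmem y).resolve_left hy
        simp only [if_neg hx, if_neg hy]
        exact lift_le_lift i _ _
end

section
/- For every finite poset P that embeds as an induced subposet of [t]^n for large n, and every fixed t ≥ 2, either sat*([t]^n, P) = O(1) as n → ∞, or sat*([t]^n, P) ≥ log_t(n) for all n. -/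
/-!
If `sat*([t]^n₁, P) = s < log_t n₁`, take a saturated family `F` with `s` members. Its `n₁`
columns are maps `F → [t]`, of which there are only `t ^ s < n₁`, so two coordinates `i ≠ j`
agree on every member of `F`. Duplicating coordinate `i` into a new last coordinate maps `F` to a
saturated family of the same size in `[t]^(n₁+1)`, which again has two agreeing coordinates:
an element `g` outside the image has a stand-in outside `F` that compares with `F` as `g` compares
with the image, and a copy of `P` through the stand-in moves over to `g`.
Iterating, `sat*([t]^n, P) ≤ s` for all `n ≥ n₁`, so `sat*` is bounded.
-/

open Filter

namespace InducedCopy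

variable {P : Type} [PartialOrder P] {α β : Type} [PartialOrder α] [PartialOrder β]

theorem image {S : Set α} {h : α → β} (hle : ∀ a ∈ S, ∀ b ∈ S, h a ≤ h b ↔ a ≤ b)
    (hS : InducedCopy P S) : InducedCopy P (h '' S) := by
  obtain ⟨φ, hinj, hmem, hord⟩ := hS
  have hle' : ∀ x y, h (φ x) ≤ h (φ y) ↔ x ≤ y := fun x y =>
    (hle _ (hmem x) _ (hmem y)).trans (hord x y)
  exact ⟨h ∘ φ, fun x y hxy => le_antisymm ((hle' x y).1 hxy.le) ((hle' y x).1 hxy.ge),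
    fun x => Set.mem_image_of_mem h (hmem x), hle'⟩

theorem of_image_orderEmbedding (e : α ↪o β) {F : Set α} (hF : InducedCopy P (e '' F)) :
    InducedCopy P F := by
  obtain ⟨φ, hinj, hmem, hord⟩ := hF
  choose ψ hψF hψ using hmem
  refine ⟨ψ, fun x y hxy => hinj (by rw [← hψ x, ← hψ y, hxy]), hψF, fun x y => ?_⟩
  rw [← hord, ← hψ x, ← hψ y, e.le_iff_le]

theorem of_isEmpty [IsEmpty P] (S : Set α) : InducedCopy P S :=
  ⟨isEmptyElim, isEmptyElim, isEmptyElim, isEmptyElim⟩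

end InducedCopy

theorem PSaturated.image_orderEmbedding {P : Type} [PartialOrder P] {α β : Type}
    [PartialOrder α] [PartialOrder β] (e : α ↪o β) {F : Set α} (hF : PSaturated P F)
    (hpatch : ∀ g ∉ e '' F, ∃ w ∉ F, ∀ f ∈ F, (w ≤ f ↔ g ≤ e f) ∧ (f ≤ w ↔ e f ≤ g)) :
    PSaturated P (e '' F) := by
  classical
  refine ⟨fun hcopy => hF.1 hcopy.of_image_orderEmbedding, fun g hg => ?_⟩
  obtain ⟨w, hwF, hw⟩ := hpatch g hg
  have hupdate : ∀ f ∈ F, Function.update e w g f = e f := fun f hf =>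
    Function.update_of_ne (ne_of_mem_of_not_mem hf hwF) _ _
  have himage : Function.update e w g '' insert w F = insert g (e '' F) := by
    rw [Set.image_insert_eq, Function.update_self, Set.image_congr hupdate]
  rw [← himage]
  refine (hF.2 w hwF).image ?_
  rintro a (rfl | ha) b (rfl | hb)
  · simp
  · rw [Function.update_self, hupdate b hb, (hw b hb).1]
  · rw [Function.update_self, hupdate a ha, (hw a ha).2]
  · rw [hupdate a ha, hupdate b hb, e.le_iff_le]

theorem exists_pSaturated (P : Type) [PartialOrder P] [Nonempty P] (α : Type) [PartialOrder α]
    [Finite α] : ∃ F : Set α, PSaturated P F := by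
  have hfree : PFree P (∅ : Set α) := fun ⟨φ, _, hmem, _⟩ => hmem (Classical.arbitrary P)
  obtain ⟨F, hF, hmax⟩ := Set.Finite.exists_maximalFor id {G : Set α | PFree P G}
    (Set.toFinite _) ⟨∅, hfree⟩
  refine ⟨F, hF, fun g hg => ?_⟩
  by_contra hcopy
  exact hg (hmax hcopy (Set.subset_insert g F) (Set.mem_insert g F))

theorem pow_lt_of_lt_logb {t n s : ℕ} (h : (s : ℝ) < Real.logb t n) : t ^ s < n := by
  rcases le_or_gt t 1 with ht | ht
  · -- `Real.log t = 0` here, and division by zero makes `Real.logb t` vanish.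
    have hlogb : Real.logb t n = 0 := by
      interval_cases t <;> simp [Real.logb_zero_left, Real.logb_one_left]
    exact absurd (hlogb ▸ h) (Nat.cast_nonneg s).not_gt
  · have hn : (0 : ℝ) < n := by
      rcases Nat.eq_zero_or_pos n with rfl | hn
      · exact absurd h (by simp)
      · exact_mod_cast hn
    have := (Real.lt_logb_iff_rpow_lt (by exact_mod_cast ht) hn).1 h
    exact_mod_cast (Real.rpow_natCast (t : ℝ) s) ▸ this

section Grid

variable {t n : ℕ}

@[simp]
theorem lift_castSucc (i : Fin n) (f : Fin n → Fin t) (x : Fin n) :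
    lift i f x.castSucc = f x := Fin.snoc_castSucc _ _ _

@[simp]
theorem lift_last (i : Fin n) (f : Fin n → Fin t) : lift i f (Fin.last n) = f i :=
  Fin.snoc_last _ _

theorem le_lift_iff {i : Fin n} {f : Fin n → Fin t} {g : Fin (n + 1) → Fin t} :
    g ≤ lift i f ↔ (∀ x, g x.castSucc ≤ f x) ∧ g (Fin.last n) ≤ f i := by
  simp [Pi.le_def, Fin.forall_fin_succ']

theorem lift_le_iff {i : Fin n} {f : Fin n → Fin t} {g : Fin (n + 1) → Fin t} :
    lift i f ≤ g ↔ (∀ x, f x ≤ g x.castSucc) ∧ f i ≤ g (Fin.last n) := by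
  simp [Pi.le_def, Fin.forall_fin_succ']

theorem lift_le_lift_iff {i : Fin n} {f f' : Fin n → Fin t} : lift i f ≤ lift i f' ↔ f ≤ f' := by
  simp only [lift_le_iff, lift_castSucc, lift_last]
  exact ⟨fun h => h.1, fun h => ⟨h, h i⟩⟩

def liftOrderEmbedding (i : Fin n) : (Fin n → Fin t) ↪o (Fin (n + 1) → Fin t) :=
  OrderEmbedding.ofMapLEIff (lift i) fun _ _ => lift_le_lift_iff

/-- On an `f` with `f i = f j`, the coordinates `i`, `j` and `last` of `lift i f` all carry `f i`.
Storing the maximum of `g` over them at `i` and the minimum at `j` therefore gives a point that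
compares with `f` exactly as `g` compares with `lift i f`. -/
def patch (i j : Fin n) (g : Fin (n + 1) → Fin t) : Fin n → Fin t :=
  Function.update (Function.update (fun x => g x.castSucc) i
      (max (g i.castSucc) (max (g j.castSucc) (g (Fin.last n))))) j
    (min (g i.castSucc) (min (g j.castSucc) (g (Fin.last n))))

theorem patch_le_iff {i j : Fin n} (hij : i ≠ j) {g : Fin (n + 1) → Fin t}
    {f : Fin n → Fin t} (hf : f i = f j) : patch i j g ≤ f ↔ g ≤ lift i f := by
  simp only [patch, update_le_iff, Function.update_apply, le_lift_iff]
  grind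

theorem le_patch_iff {i j : Fin n} (hij : i ≠ j) {g : Fin (n + 1) → Fin t}
    {f : Fin n → Fin t} (hf : f i = f j) : f ≤ patch i j g ↔ lift i f ≤ g := by
  simp only [patch, le_update_iff, Function.update_apply, lift_le_iff]
  grind

theorem lift_patch {i j : Fin n} (hij : i ≠ j) {g : Fin (n + 1) → Fin t}
    (h : patch i j g i = patch i j g j) : lift i (patch i j g) = g := by
  ext x
  induction x using Fin.lastCases <;>
    simp only [patch, lift_last, lift_castSucc, Function.update_apply] at h ⊢ <;> grind

def HasTwinCoords (F : Set (Fin n → Fin t)) : Prop :=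
  ∃ i j, i ≠ j ∧ ∀ f ∈ F, f i = f j

theorem hasTwinCoords_of_pow_ncard_lt {F : Set (Fin n → Fin t)} (h : t ^ F.ncard < n) :
    HasTwinCoords F := by
  have hcols : ¬ Function.Injective fun x (f : F) => f.1 x := fun hinj => by
    have := Nat.card_le_card_of_injective _ hinj
    rw [Nat.card_fun, Nat.card_coe_set_eq, Nat.card_fin, Nat.card_fin] at this
    omega
  obtain ⟨i, j, hcol, hij⟩ := Function.not_injective_iff.1 hcols
  exact ⟨i, j, hij, fun f hf => congrFun hcol ⟨f, hf⟩⟩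

theorem hasTwinCoords_image_lift (i : Fin n) (F : Set (Fin n → Fin t)) :
    HasTwinCoords (lift i '' F) :=
  ⟨i.castSucc, Fin.last n, (Fin.castSucc_lt_last i).ne, by simp⟩

theorem PSaturated.image_lift {P : Type} [PartialOrder P] {F : Set (Fin n → Fin t)}
    (hF : PSaturated P F) {i j : Fin n} (hij : i ≠ j) (htwin : ∀ f ∈ F, f i = f j) :
    PSaturated P (lift i '' F) :=
  hF.image_orderEmbedding (liftOrderEmbedding i) fun g hg =>
    ⟨patch i j g, fun hw => hg ⟨_, hw, lift_patch hij (htwin _ hw)⟩,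
      fun f hf => ⟨patch_le_iff hij (htwin f hf), le_patch_iff hij (htwin f hf)⟩⟩

theorem satStar_add_le_ncard {P : Type} [PartialOrder P] (k : ℕ) {F : Set (Fin n → Fin t)}
    (hF : PSaturated P F) (htwin : HasTwinCoords F) : satStar t (n + k) P ≤ F.ncard := by
  induction k generalizing n with
  | zero => exact Nat.sInf_le ⟨F, hF, rfl⟩
  | succ k ih =>
    obtain ⟨i, j, hij, htwin⟩ := htwin
    have := ih (hF.image_lift hij htwin) (hasTwinCoords_image_lift i F)
    rw [Nat.add_right_comm] at this
    exact this.trans_eq (Set.ncard_image_of_injective F (liftOrderEmbedding i).injective)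

end Grid

theorem satStar_eq_zero_of_isEmpty (t n : ℕ) (P : Type) [PartialOrder P] [IsEmpty P] :
    satStar t n P = 0 := by
  simp [satStar, PSaturated, PFree, InducedCopy.of_isEmpty]

theorem exists_pSaturated_ncard_eq_satStar (t n : ℕ) (P : Type) [PartialOrder P] [Nonempty P] :
    ∃ F : Set (Fin n → Fin t), PSaturated P F ∧ F.ncard = satStar t n P := by
  obtain ⟨F, hF⟩ := exists_pSaturated P (Fin n → Fin t)
  exact Nat.sInf_mem (s := {m | ∃ F : Set (Fin n → Fin t), PSaturated P F ∧ F.ncard = m})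
    ⟨_, F, hF, rfl⟩

theorem stmt3_general (t : ℕ) (P : Type) [PartialOrder P] :
    (∃ C : ℕ, ∀ n : ℕ, satStar t n P ≤ C) ∨
    (∀ n : ℕ, Real.logb t n ≤ (satStar t n P : ℝ)) := by
  cases isEmpty_or_nonempty P
  · exact Or.inl ⟨0, fun n => (satStar_eq_zero_of_isEmpty t n P).le⟩
  refine or_iff_not_imp_right.2 fun hlog => ?_
  push Not at hlog
  obtain ⟨n₁, hn₁⟩ := hlog
  obtain ⟨F, hF, hcard⟩ := exists_pSaturated_ncard_eq_satStar t n₁ P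
  have htwin := hasTwinCoords_of_pow_ncard_lt (hcard ▸ pow_lt_of_lt_logb hn₁)
  have hle_sup : ∀ n ≤ n₁, satStar t n P ≤ (Finset.range (n₁ + 1)).sup (satStar t · P) :=
    fun n hn => Finset.le_sup (f := (satStar t · P)) (Finset.mem_range.2 (Nat.lt_succ_of_le hn))
  refine ⟨_, fun n => (le_total n n₁).elim (hle_sup n) fun hn => ?_⟩
  obtain ⟨k, rfl⟩ := Nat.exists_eq_add_of_le hn
  exact ((satStar_add_le_ncard k hF htwin).trans hcard.le).trans (hle_sup n₁ le_rfl)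

theorem stmt3 (t : ℕ) (ht : 2 ≤ t) (P : Type) [PartialOrder P] [Finite P]
    (hembed : ∃ n₀ : ℕ, InducedCopy P (Set.univ : Set (Fin n₀ → Fin t))) :
    (∃ C : ℕ, ∀ n : ℕ, satStar t n P ≤ C) ∨
    (∀ n : ℕ, Real.logb t n ≤ (satStar t n P : ℝ)) :=
  stmt3_general t P
end

section
/- Let F ⊆ [t]^n be a family such that every coordinate i ∈ {1,...,n} is separating for F. Then n ≤ max{2(|F|−1), ⌊|F|²/4⌋}; in particular |F| = Ω(√n). -/
open Filter

/-!
Give every coordinate `i` a separating pair `fᵢ, gᵢ` and the arc `fᵢ → gᵢ`. Coordinate `i` never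
decreases along a walk avoiding arc `i` but drops along the arc itself, so no arc has a detour:
this digraph on `F` has `n` distinct arcs and no transitively oriented cycle.

Such a digraph on `m` vertices has at most `B m = max (2(m-1)) ⌊m²/4⌋` arcs. If it is acyclic,
for an arc `u → v` the in- and out-neighbourhoods of `u` and `v` are pairwise disjoint, so one of
`u, v` has degree at most `m/2`, and deleting it leaves `⌊(m-1)²/4⌋ + ⌊m/2⌋ ≤ ⌊m²/4⌋`.
Otherwise contract a shortest cycle, of length `k ≥ 2`, to a point: detours around the cycle show
that no two other arcs are identified and no detour is created, so there are at most
`B (m - k + 1) + k ≤ B m` arcs.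
-/

open Finset Relation

def edgeBound (m : ℕ) : ℕ := max (2 * (m - 1)) (m ^ 2 / 4)

lemma edgeBound_mono : Monotone edgeBound := fun _ _ h =>
  max_le_max (by omega) (Nat.div_le_div_right (Nat.pow_le_pow_left h 2))

lemma edgeBound_succ_add_le (r : ℕ) {k : ℕ} (hk : 2 ≤ k) :
    edgeBound (r + 1) + k ≤ edgeBound (r + k) := by
  unfold edgeBound
  rcases le_or_gt r 2 with hr | hr
  · have hsq : (r + 1) ^ 2 / 4 ≤ 2 * r := by interval_cases r <;> norm_num
    exact le_max_of_le_left (by omega)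
  · have hsq : (r + 1) ^ 2 / 4 + 2 * (k - 1) ≤ (r + k) ^ 2 / 4 := by
      rw [← Nat.add_mul_div_left _ _ (by norm_num : 0 < 4)]
      apply Nat.div_le_div_right
      obtain ⟨d, rfl⟩ : ∃ d, k = d + 1 := ⟨k - 1, by omega⟩
      rw [Nat.add_sub_cancel]
      nlinarith
    rw [← max_add_add_right]
    exact max_le (le_max_of_le_left (by omega)) (le_max_of_le_right (by omega))

lemma sq_sub_one_div_four_add_half_le (m : ℕ) : (m - 1) ^ 2 / 4 + m / 2 ≤ m ^ 2 / 4 := by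
  rcases Nat.even_or_odd' m with ⟨q, rfl | rfl⟩
  · rcases q with _ | q
    · simp
    have h1 : (2 * (q + 1) - 1) ^ 2 = 4 * (q * q + q) + 1 := by
      rw [show 2 * (q + 1) - 1 = 2 * q + 1 by omega]; ring
    have h2 : (2 * (q + 1)) ^ 2 = 4 * (q * q + 2 * q + 1) := by ring
    rw [h1, h2]; omega
  · have h1 : (2 * q + 1 - 1) ^ 2 = 4 * (q * q) := by rw [Nat.add_sub_cancel]; ring
    have h2 : (2 * q + 1) ^ 2 = 4 * (q * q + q) + 1 := by ring
    rw [h1, h2]; omega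

theorem Relation.ReflTransGen.of_map {α β : Type*} {r : α → α → Prop} {p : β → β → Prop}
    (f : α → β) (hfib : ∀ x y, f x = f y → ReflTransGen r x y)
    (hp : ∀ a' b', p a' b' → ∃ a b, f a = a' ∧ f b = b' ∧ r a b) {x y : α}
    (h : ReflTransGen p (f x) (f y)) : ReflTransGen r x y := by
  suffices ∀ y', ReflTransGen p (f x) y' → ∀ y, f y = y' → ReflTransGen r x y from
    this _ h y rfl
  intro y' h'
  induction h' with
  | refl => exact fun y hy => hfib x y hy.symm
  | tail _ hbc ih =>
    obtain ⟨a, b, rfl, rfl, hab⟩ := hp _ _ hbc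
    exact fun y hy => ((ih a rfl).tail hab).trans (hfib b y hy.symm)

variable {V : Type*} {E E' C : Finset (V × V)} {S c c₀ : Finset V} {u : V}

def Arc (E : Finset (V × V)) (a b : V) : Prop := (a, b) ∈ E

def Sinkless (E : Finset (V × V)) (c : Finset V) : Prop :=
  ∀ a ∈ c, ∃ b ∈ c, (a, b) ∈ E

-- For finite vertex sets this is the absence of directed cycles.
def Acyclic (E : Finset (V × V)) : Prop :=
  ∀ c : Finset V, c.Nonempty → ¬ Sinkless E c

def StronglyConnectedOn (C : Finset (V × V)) (c : Finset V) : Prop :=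
  ∀ a ∈ c, ∀ b ∈ c, ReflTransGen (Arc C) a b

namespace Sinkless

lemma mono (h : E ⊆ E') (hs : Sinkless E c) : Sinkless E' c := fun a ha =>
  (hs a ha).imp fun _ ⟨hb, hab⟩ => ⟨hb, h hab⟩

lemma subset (hE : E ⊆ S ×ˢ S) (hs : Sinkless E c) : c ⊆ S := fun a ha =>
  have ⟨_, _, hab⟩ := hs a ha
  (mem_product.1 (hE hab)).1

/-- A minimal nonempty sinkless set is a cycle: it is strongly connected through one chosen
out-arc per vertex. -/
lemma exists_cycle (hs : Sinkless E c₀) (hc : c₀.Nonempty) :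
    ∃ c : Finset V, c.Nonempty ∧ Sinkless E c ∧
      ∃ C ⊆ E, C.card ≤ c.card ∧ StronglyConnectedOn C c := by
  classical
  obtain ⟨c, hcand, hmin⟩ :=
    (c₀.powerset.filter fun d => d.Nonempty ∧ Sinkless E d).exists_min_image card
      ⟨c₀, by simp [hc, hs]⟩
  simp only [mem_filter, mem_powerset] at hcand hmin
  obtain ⟨hcc₀, hne, hsink⟩ := hcand
  choose! s hsucc using id hsink
  set C := c.image fun a => (a, s a)
  refine ⟨c, hne, hsink, C, ?_, card_image_le, fun a ha b hb => ?_⟩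
  · simp only [C, image_subset_iff]
    exact fun a ha => (hsucc a ha).2
  · set R := c.filter (ReflTransGen (Arc C) a)
    have hR : R = c := by
      refine eq_of_subset_of_card_le (filter_subset _ _) (hmin R ⟨?_, ⟨a, ?_⟩, ?_⟩)
      · exact (filter_subset _ _).trans hcc₀
      · exact mem_filter.2 ⟨ha, .refl⟩
      · intro x hx
        obtain ⟨hxc, hax⟩ := mem_filter.1 hx
        exact ⟨s x, mem_filter.2 ⟨(hsucc x hxc).1, hax.tail (mem_image_of_mem _ hxc)⟩,
          (hsucc x hxc).2⟩
    exact (mem_filter.1 (hR ▸ hb : b ∈ R)).2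

end Sinkless

variable [DecidableEq V]

/-- A walk from `a` to `b` avoiding the arc `(a, b)` is, once shortened to a path, a transitively
oriented cycle `TC_k` with `k ≥ 3`, or a loop when `a = b`. -/
def TCFree (E : Finset (V × V)) : Prop :=
  ∀ e ∈ E, ¬ ReflTransGen (Arc (E.erase e)) e.1 e.2

namespace TCFree

lemma mono (h : E' ⊆ E) (hT : TCFree E) : TCFree E' := fun e he hw =>
  hT e (h he) (ReflTransGen.mono (fun _ _ hab => erase_subset_erase e h hab) _ _ hw)

lemma not_loop (hT : TCFree E) (a : V) : (a, a) ∉ E := fun h => hT _ h .refl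

lemma not_triangle (hT : TCFree E) {a b d : V} (hab : (a, b) ∈ E) (hbd : (b, d) ∈ E) :
    (a, d) ∉ E := by
  intro had
  have hbd' : b ≠ d := fun h => hT.not_loop b (h ▸ hbd)
  have hab' : a ≠ b := fun h => hT.not_loop a (h ▸ hab)
  refine hT _ had (.head (b := b) ?_ (.single ?_))
  · exact mem_erase.2 ⟨fun h => hbd' (Prod.ext_iff.1 h).2, hab⟩
  · exact mem_erase.2 ⟨fun h => hab' (Prod.ext_iff.1 h).1.symm, hbd⟩

end TCFree

lemma Sinkless.two_le_card (hT : TCFree E) (hs : Sinkless E c) (hc : c.Nonempty) :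
    2 ≤ c.card := by
  obtain ⟨a, ha⟩ := hc
  obtain ⟨b, hb, hab⟩ := hs a ha
  exact one_lt_card.2 ⟨a, ha, b, hb, fun h => hT.not_loop a (h ▸ hab)⟩

lemma card_filter_incident_le (hE : E ⊆ S ×ˢ S) (x : V) :
    (E.filter fun e => e.1 = x ∨ e.2 = x).card ≤
      (S.filter fun y => (x, y) ∈ E).card + (S.filter fun y => (y, x) ∈ E).card := by
  calc (E.filter fun e => e.1 = x ∨ e.2 = x).card
      ≤ (({x} : Finset V) ×ˢ S.filter (fun y => (x, y) ∈ E) ∪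
          S.filter (fun y => (y, x) ∈ E) ×ˢ ({x} : Finset V)).card := by
        refine card_le_card fun e he => ?_
        obtain ⟨heE, hx | hx⟩ := mem_filter.1 he <;>
          have := mem_product.1 (hE heE) <;> subst hx <;> simp [this, heE]
    _ ≤ _ := (card_union_le _ _).trans_eq (by simp)

/-- A vertex adjacent to both `u` and `v`, or to one of them in both directions, would close a
triangle with a detour or a directed cycle. -/
lemma TCFree.card_nbrs_add_card_nbrs_le (hT : TCFree E) (hacyc : Acyclic E) {u v : V}
    (huv : (u, v) ∈ E) :
    (S.filter fun y => (u, y) ∈ E).card + (S.filter fun y => (y, u) ∈ E).card +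
      ((S.filter fun y => (v, y) ∈ E).card + (S.filter fun y => (y, v) ∈ E).card) ≤
        S.card := by
  have h2 : ∀ {a b}, (a, b) ∈ E → (b, a) ∉ E := fun {a b} hab hba =>
    hacyc {a, b} (insert_nonempty _ _) (by
      intro x hx; simp only [mem_insert, mem_singleton] at hx
      rcases hx with rfl | rfl
      exacts [⟨b, by simp, hab⟩, ⟨a, by simp, hba⟩])
  have h3 : ∀ {a b d}, (a, b) ∈ E → (b, d) ∈ E → (d, a) ∉ E := fun {a b d} hab hbd hda =>
    hacyc {a, b, d} (insert_nonempty _ _) (by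
      intro x hx; simp only [mem_insert, mem_singleton] at hx
      rcases hx with rfl | rfl | rfl
      exacts [⟨b, by simp, hab⟩, ⟨d, by simp, hbd⟩, ⟨a, by simp, hda⟩])
  simp only [card_filter, ← sum_add_distrib]
  refine (sum_le_sum fun w _ => ?_).trans (card_eq_sum_ones S).ge
  have := @h2 u w; have := @h2 v w; have := @h3 u v w
  have := hT.not_triangle (a := u) (b := v) (d := w)
  have := hT.not_triangle (a := u) (b := w) (d := v)
  have := hT.not_triangle (a := w) (b := u) (d := v)
  split_ifs <;> simp_all

lemma TCFree.card_le_sq_div_four (hE : E ⊆ S ×ˢ S) (hT : TCFree E) (hacyc : Acyclic E) :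
    E.card ≤ S.card ^ 2 / 4 := by
  induction S using Finset.strongInduction generalizing E with
  | H S ih =>
  obtain rfl | ⟨⟨u, v⟩, huv⟩ := E.eq_empty_or_nonempty
  · simp
  set deg : V → ℕ := fun x => (E.filter fun e => e.1 = x ∨ e.2 = x).card
  obtain ⟨x, hxS, hx⟩ : ∃ x ∈ S, 2 * deg x ≤ S.card := by
    have hsum := hT.card_nbrs_add_card_nbrs_le (S := S) hacyc huv
    have hu : deg u ≤ _ := card_filter_incident_le hE u
    have hv : deg v ≤ _ := card_filter_incident_le hE v
    obtain ⟨huS, hvS⟩ := mem_product.1 (hE huv)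
    rcases le_total (deg u) (deg v) with h | h
    exacts [⟨u, huS, by omega⟩, ⟨v, hvS, by omega⟩]
  have hrest : E.filter (fun e => ¬(e.1 = x ∨ e.2 = x)) ⊆ S.erase x ×ˢ S.erase x := by
    intro e he
    obtain ⟨heE, hex⟩ := mem_filter.1 he
    obtain ⟨h1, h2⟩ := mem_product.1 (hE heE)
    rw [not_or] at hex
    exact mem_product.2 ⟨mem_erase.2 ⟨hex.1, h1⟩, mem_erase.2 ⟨hex.2, h2⟩⟩
  have hrec := ih (S.erase x) (erase_ssubset hxS) hrest (hT.mono (filter_subset _ _))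
    fun c hc hs => hacyc c hc (hs.mono (filter_subset _ _))
  rw [card_erase_of_mem hxS] at hrec
  have := sq_sub_one_div_four_add_half_le S.card
  rw [← card_filter_add_card_filter_not (s := E) (fun e => e.1 = x ∨ e.2 = x)]
  change deg x + _ ≤ _
  omega

def collapse (c : Finset V) (u x : V) : V := if x ∈ c then u else x

lemma collapse_eq_collapse (hu : u ∈ c) {x y : V} (h : collapse c u x = collapse c u y) :
    x = y ∨ x ∈ c ∧ y ∈ c := by
  unfold collapse at h
  split_ifs at h with hx hy hy <;> subst_vars <;> tauto

lemma image_collapse_subset (hc : c ⊆ S) (hu : u ∈ c) : S.image (collapse c u) ⊆ S := by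
  simp only [image_subset_iff, collapse]
  intro x hx
  split_ifs
  exacts [hc hu, hx]

lemma card_image_collapse_add_le (hc : c ⊆ S) :
    (S.image (collapse c u)).card + c.card ≤ S.card + 1 := by
  have hsub : S.image (collapse c u) ⊆ insert u (S \ c) := by
    simp only [image_subset_iff, collapse]
    intro x hx
    split_ifs with hxc
    exacts [mem_insert_self _ _, mem_insert_of_mem (mem_sdiff.2 ⟨hx, hxc⟩)]
  have := (card_le_card hsub).trans (card_insert_le _ _)
  rw [card_sdiff_of_subset hc] at this
  have := card_le_card hc
  omega

lemma reflTransGen_erase_of_collapse_eq (hCE : C ⊆ E) (hC : StronglyConnectedOn C c)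
    (hu : u ∈ c) {e : V × V} (he : e ∉ C) {x y : V} (h : collapse c u x = collapse c u y) :
    ReflTransGen (Arc (E.erase e)) x y := by
  rcases collapse_eq_collapse hu h with rfl | ⟨hx, hy⟩
  · exact .refl
  · refine ReflTransGen.mono (fun a b hab => mem_erase.2 ⟨?_, hCE hab⟩) _ _ (hC x hx y hy)
    rintro rfl
    exact he hab

lemma TCFree.injOn_collapse (hT : TCFree E) (hCE : C ⊆ E) (hC : StronglyConnectedOn C c)
    (hu : u ∈ c) :
    Set.InjOn (Prod.map (collapse c u) (collapse c u)) ↑(E \ C) := by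
  intro p hp q hq hpq
  by_contra hne
  rw [coe_sdiff, Set.mem_sdiff] at hp hq
  have h1 := reflTransGen_erase_of_collapse_eq hCE hC hu hq.2 (congrArg Prod.fst hpq).symm
  have h2 := reflTransGen_erase_of_collapse_eq hCE hC hu hq.2 (congrArg Prod.snd hpq)
  exact hT q hq.1 (h1.trans (.head (mem_erase.2 ⟨hne, hp.1⟩) h2))

lemma TCFree.image_collapse (hT : TCFree E) (hCE : C ⊆ E) (hC : StronglyConnectedOn C c)
    (hu : u ∈ c) :
    TCFree ((E \ C).image (Prod.map (collapse c u) (collapse c u))) := by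
  rintro _ he' hw
  obtain ⟨p, hp, rfl⟩ := mem_image.1 he'
  obtain ⟨hpE, hpC⟩ := mem_sdiff.1 hp
  refine hT p hpE (hw.of_map (collapse c u)
    (fun x y => reflTransGen_erase_of_collapse_eq hCE hC hu hpC) fun a' b' hab' => ?_)
  obtain ⟨hne, hmem⟩ := mem_erase.1 hab'
  obtain ⟨q, hq, hqe⟩ := mem_image.1 hmem
  refine ⟨q.1, q.2, congrArg Prod.fst hqe, congrArg Prod.snd hqe, mem_erase.2 ⟨?_, ?_⟩⟩
  · rintro rfl
    exact hne hqe.symm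
  · exact (mem_sdiff.1 hq).1

theorem TCFree.card_le_edgeBound (hE : E ⊆ S ×ˢ S) (hT : TCFree E) :
    E.card ≤ edgeBound S.card := by
  induction S using Finset.strongInduction generalizing E with
  | H S ih =>
  by_cases hacyc : Acyclic E
  · exact le_max_of_le_right (hT.card_le_sq_div_four hE hacyc)
  simp only [Acyclic, not_forall, not_not] at hacyc
  obtain ⟨c₀, hne₀, hs₀⟩ := hacyc
  obtain ⟨c, ⟨u, hu⟩, hsink, C, hCE, hCc, hC⟩ := hs₀.exists_cycle hne₀
  have hcS : c ⊆ S := hsink.subset hE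
  have hc2 : 2 ≤ c.card := hsink.two_le_card hT ⟨u, hu⟩
  set S' := S.image (collapse c u)
  have hS' : S'.card + c.card ≤ S.card + 1 := card_image_collapse_add_le hcS
  have hE' : (E \ C).image (Prod.map (collapse c u) (collapse c u)) ⊆ S' ×ˢ S' := by
    simp only [image_subset_iff, mem_product]
    intro p hp
    obtain ⟨h1, h2⟩ := mem_product.1 (hE (mem_sdiff.1 hp).1)
    exact ⟨mem_image_of_mem _ h1, mem_image_of_mem _ h2⟩
  have hssub : S' ⊂ S := ssubset_of_subset_of_ne (image_collapse_subset hcS hu) fun h => by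
    rw [h] at hS'; omega
  have hrec := ih S' hssub hE' (hT.image_collapse hCE hC hu)
  rw [card_image_of_injOn (hT.injOn_collapse hCE hC hu)] at hrec
  obtain ⟨r, hr⟩ : ∃ r, S.card = r + c.card :=
    ⟨S.card - c.card, by have := card_le_card hcS; omega⟩
  calc E.card ≤ (E \ C).card + C.card := card_le_card_sdiff_add_card
    _ ≤ edgeBound (r + 1) + c.card := add_le_add (hrec.trans (edgeBound_mono (by omega))) hCc
    _ ≤ edgeBound S.card := hr ▸ edgeBound_succ_add_le r hc2

section Separating

variable {ι α : Type*} [Preorder α] {f g : ι → ι → α}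

lemma injective_of_separating (hle : ∀ i x, x ≠ i → f i x ≤ g i x)
    (hlt : ∀ i, g i i < f i i) : Function.Injective fun i => (f i, g i) := by
  intro i j hij
  by_contra hne
  obtain ⟨hf, hg⟩ : f i = f j ∧ g i = g j := Prod.ext_iff.1 hij
  have := hle j i hne
  rw [← hf, ← hg] at this
  exact (hlt i).not_ge this

lemma tcFree_of_separating [Fintype ι] [DecidableEq α] (hle : ∀ i x, x ≠ i → f i x ≤ g i x)
    (hlt : ∀ i, g i i < f i i) : TCFree (univ.image fun i => (f i, g i)) := by
  rintro _ he hw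
  obtain ⟨i, -, rfl⟩ := mem_image.1 he
  have hmono : ReflTransGen (α := α) (· ≤ ·) (f i i) (g i i) := by
    refine ReflTransGen.lift (· i) (fun a b hab => ?_) _ _ hw
    obtain ⟨hne, hmem⟩ := mem_erase.1 hab
    obtain ⟨j, -, hj⟩ := mem_image.1 hmem
    obtain ⟨rfl, rfl⟩ := Prod.ext_iff.1 hj
    exact hle j i fun h => hne (h ▸ hj)
  rw [reflTransGen_eq_self] at hmono
  exact (hlt i).not_ge hmono

end Separating

theorem stmt5 (t n : ℕ) (F : Finset (Fin n → Fin t))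
    (h : ∀ i : Fin n, Separating (F : Set (Fin n → Fin t)) i) :
    n ≤ max (2 * (F.card - 1)) (F.card ^ 2 / 4) := by
  choose f hf g hg _ hle hlt using h
  have hE : univ.image (fun i => (f i, g i)) ⊆ F ×ˢ F := by
    simp only [image_subset_iff, mem_product]
    exact fun i _ => ⟨hf i, hg i⟩
  have := (tcFree_of_separating hle hlt).card_le_edgeBound hE
  rwa [card_image_of_injective _ (injective_of_separating hle hlt), card_univ,
    Fintype.card_fin] at this
end

section
/- Let P be a finite poset and F ⊆ [t]^n an induced P-free, induced P-saturated family, and suppose coordinate i is not separating for F. Then there exists an induced P-free, induced P-saturated family F' ⊆ [t]^n with |F'| = |F| such that f(i) ∈ {1, t} for every f ∈ F'. -/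
open Filter

/-!
Squash coordinate `i` to its two extreme values: the top value stays on top and every other
value drops to the bottom. Because `i` is not separating, comparabilities inside `F` are decided
by the other coordinates, so the squashing map is an order embedding on `F` and the image is
again induced `P`-free, of the same size. For saturation, a point `g` outside the image is
matched with a point `g'` obtained from `g` by changing only its `i`-th value to a suitable
threshold `a`, chosen so that `g'` relates to each member of `F` exactly as `g` relates to its
image. Such an `a` exists because, again by non-separation, the `i`-th values of the members of
`F` lying below `g` off `i` are at most those of the members lying above `g` off `i`. Then
`g' ∉ F`, and a copy of `P` in `F ∪ {g'}` is carried over to the image with `g`.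
-/

section InducedCopy

variable {P α β : Type} [PartialOrder P] [PartialOrder α] [PartialOrder β]

lemma Set.injOn_of_le_iff {A : Set α} {Ψ : α → β}
    (hΨ : ∀ a ∈ A, ∀ a' ∈ A, Ψ a ≤ Ψ a' ↔ a ≤ a') : A.InjOn Ψ :=
  fun a ha a' ha' h => le_antisymm ((hΨ a ha a' ha').1 h.le) ((hΨ a' ha' a ha).1 h.ge)

lemma inducedCopy_iff {F : Set α} :
    InducedCopy P F ↔ ∃ φ : P → α, (∀ x, φ x ∈ F) ∧ ∀ x y, φ x ≤ φ y ↔ x ≤ y :=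
  ⟨fun ⟨φ, _, hF, hφ⟩ => ⟨φ, hF, hφ⟩,
    fun ⟨φ, hF, hφ⟩ => ⟨φ, (OrderEmbedding.ofMapLEIff φ hφ).injective, hF, hφ⟩⟩

lemma InducedCopy.map {A : Set α} {B : Set β} (h : InducedCopy P A) {Ψ : α → β}
    (hmaps : Set.MapsTo Ψ A B) (hΨ : ∀ a ∈ A, ∀ a' ∈ A, Ψ a ≤ Ψ a' ↔ a ≤ a') :
    InducedCopy P B := by
  obtain ⟨φ, hφA, hφ⟩ := inducedCopy_iff.1 h
  refine inducedCopy_iff.2 ⟨Ψ ∘ φ, fun x => hmaps (hφA x), fun x y => ?_⟩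
  rw [Function.comp_apply, Function.comp_apply, hΨ _ (hφA x) _ (hφA y), hφ]

lemma InducedCopy.of_image {A : Set α} {Ψ : α → β} (h : InducedCopy P (Ψ '' A))
    (hΨ : ∀ a ∈ A, ∀ a' ∈ A, Ψ a ≤ Ψ a' ↔ a ≤ a') : InducedCopy P A := by
  obtain ⟨φ, hφA, hφ⟩ := inducedCopy_iff.1 h
  choose ψ hψA hψφ using hφA
  refine inducedCopy_iff.2 ⟨ψ, hψA, fun x y => ?_⟩
  rw [← hΨ _ (hψA x) _ (hψA y), hψφ, hψφ, hφ]

theorem PSaturated.image {A : Set α} (hA : PSaturated P A) {Ψ : α → β}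
    (hΨ : ∀ a ∈ A, ∀ a' ∈ A, Ψ a ≤ Ψ a' ↔ a ≤ a')
    (hext : ∀ b ∉ Ψ '' A, ∃ a, ∀ a' ∈ A, (a ≤ a' ↔ b ≤ Ψ a') ∧ (a' ≤ a ↔ Ψ a' ≤ b)) :
    PSaturated P (Ψ '' A) := by
  classical
  refine ⟨fun h => hA.1 (h.of_image hΨ), fun b hb => ?_⟩
  obtain ⟨a, ha⟩ := hext b hb
  have haA : a ∉ A := fun haA =>
    hb ⟨a, haA, le_antisymm ((ha a haA).2.1 le_rfl) ((ha a haA).1.1 le_rfl)⟩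
  refine (hA.2 a haA).map (Ψ := Function.update Ψ a b) ?_ ?_
  · rintro x (rfl | hx)
    · simp
    · simp [Function.update_of_ne (ne_of_mem_of_not_mem hx haA), Set.mem_image_of_mem Ψ hx]
  · have hupd : ∀ x ∈ A, Function.update Ψ a b x = Ψ x :=
      fun x hx => Function.update_of_ne (ne_of_mem_of_not_mem hx haA) _ _
    rintro x (rfl | hx) y (rfl | hy)
    · simp
    · rw [Function.update_self, hupd y hy, (ha y hy).1]
    · rw [Function.update_self, hupd x hx, (ha x hx).2]
    · rw [hupd x hx, hupd y hy, hΨ x hx y hy]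

end InducedCopy

def NonSeparating {ι β : Type} [Preorder β] (F : Set (ι → β)) (i : ι) : Prop :=
  ∀ f ∈ F, ∀ f' ∈ F, (∀ j ≠ i, f j ≤ f' j) → f i ≤ f' i

section Squash

variable {β : Type} [LinearOrder β] [BoundedOrder β]

def topOrBot (b : β) : β := if b = ⊤ then ⊤ else ⊥

lemma topOrBot_mono : Monotone (topOrBot : β → β) := by
  intro b b' h
  unfold topOrBot
  split_ifs with hb hb' <;> simp_all

lemma topOrBot_eq_bot_or_eq_top (b : β) : topOrBot b = ⊥ ∨ topOrBot b = ⊤ := by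
  unfold topOrBot
  split_ifs <;> simp

lemma le_topOrBot_iff {m b : β} : m ≤ topOrBot b ↔ m = ⊥ ∨ b = ⊤ := by
  unfold topOrBot
  split_ifs with hb <;> simp [hb]

lemma topOrBot_le_iff {m b : β} : topOrBot b ≤ m ↔ b ≠ ⊤ ∨ m = ⊤ := by
  unfold topOrBot
  split_ifs with hb <;> simp [hb]

lemma exists_lt_top_forall_le [Finite β] (hβ : (⊥ : β) < ⊤) (S : Set β) :
    ∃ L < ⊤, (∀ d ∈ S, d ≠ ⊤ → d ≤ L) ∧ ∀ b, (∀ d ∈ S, d ≤ b) → L ≤ b := by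
  classical
  let s := (S ∩ {⊤}ᶜ).toFinite.toFinset
  refine ⟨s.sup id, (Finset.sup_lt_iff hβ).2 fun d hd => ?_, fun d hd hne => ?_, fun b hb => ?_⟩
  · simp only [s, Set.Finite.mem_toFinset] at hd
    exact lt_top_iff_ne_top.2 hd.2
  · exact Finset.le_sup (f := id) (by simp [s, hd, hne])
  · refine Finset.sup_le fun d hd => hb d ?_
    simp only [s, Set.Finite.mem_toFinset] at hd
    exact hd.1

lemma exists_threshold [Finite β] {D U : Set β} (hDU : ∀ d ∈ D, ∀ u ∈ U, d ≤ u) (m : β) :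
    ∃ a, (∀ u ∈ U, a ≤ u ↔ m ≤ topOrBot u) ∧ (∀ d ∈ D, d ≤ a ↔ topOrBot d ≤ m) := by
  simp only [le_topOrBot_iff, topOrBot_le_iff]
  by_cases hL : m ≠ ⊤ ∧ (m = ⊥ ∨ ∀ u ∈ U, u = ⊤)
  · obtain ⟨L, hL_lt, hDL, hLU⟩ :=
      exists_lt_top_forall_le (bot_le.trans_lt (lt_top_iff_ne_top.2 hL.1)) D
    refine ⟨L, fun u hu => ?_, fun d hd => ?_⟩
    · simp only [hLU u (hDU · · u hu), true_iff]
      exact hL.2.imp_right (· u hu)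
    · simp only [hL.1, or_false]
      exact ⟨fun hdL hd_top => (hd_top ▸ hdL).not_gt hL_lt, hDL d hd⟩
  · push Not at hL
    refine ⟨⊤, fun u hu => ?_, fun d hd => ?_⟩
    · simp only [top_le_iff, iff_or_self]
      rintro rfl
      by_cases hbt : (⊥ : β) = ⊤
      · exact top_unique (hbt ▸ bot_le)
      · exact absurd rfl (hL hbt).1
    · simp only [le_top, true_iff]
      by_cases hm : m = ⊤
      · exact Or.inr hm
      · obtain ⟨u, hu, hu_top⟩ := (hL hm).2
        exact Or.inl (ne_top_of_le_ne_top hu_top (hDU d hd u hu))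

variable {ι : Type} [DecidableEq ι]

def squashAt (i : ι) (f : ι → β) : ι → β := Function.update f i (topOrBot (f i))

lemma squashAt_apply_self (i : ι) (f : ι → β) : squashAt i f i = topOrBot (f i) :=
  Function.update_self _ _ _

variable {F : Set (ι → β)} {i : ι}

lemma squashAt_le_squashAt_iff (hF : NonSeparating F i) {f f' : ι → β} (hf : f ∈ F)
    (hf' : f' ∈ F) : squashAt i f ≤ squashAt i f' ↔ f ≤ f' := by
  rw [squashAt, squashAt, update_le_update_iff]
  refine ⟨fun ⟨_, h⟩ j => ?_, fun h => ⟨topOrBot_mono (h i), fun j _ => h j⟩⟩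
  by_cases hj : j = i
  · exact hj ▸ hF f hf f' hf' h
  · exact h j hj

lemma exists_le_iff_le_squashAt [Finite β] (hF : NonSeparating F i) (g : ι → β) :
    ∃ g', ∀ f ∈ F, (g' ≤ f ↔ g ≤ squashAt i f) ∧ (f ≤ g' ↔ squashAt i f ≤ g) := by
  have hDU : ∀ d ∈ (· i) '' {f ∈ F | ∀ j ≠ i, f j ≤ g j},
      ∀ u ∈ (· i) '' {f ∈ F | ∀ j ≠ i, g j ≤ f j}, d ≤ u := by
    rintro _ ⟨d, ⟨hd, hdg⟩, rfl⟩ _ ⟨u, ⟨hu, hgu⟩, rfl⟩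
    exact hF d hd u hu fun j hj => (hdg j hj).trans (hgu j hj)
  obtain ⟨a, hU, hD⟩ := exists_threshold hDU (g i)
  refine ⟨Function.update g i a, fun f hf => ⟨?_, ?_⟩⟩
  · rw [update_le_iff, squashAt, le_update_iff]
    exact and_congr_left fun hgf => hU _ ⟨f, ⟨hf, hgf⟩, rfl⟩
  · rw [le_update_iff, squashAt, update_le_iff]
    exact and_congr_left fun hfg => hD _ ⟨f, ⟨hf, hfg⟩, rfl⟩

theorem PSaturated.image_squashAt [Finite β] {P : Type} [PartialOrder P]
    (hsat : PSaturated P F) (hF : NonSeparating F i) : PSaturated P (squashAt i '' F) :=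
  hsat.image (fun _ hf _ hf' => squashAt_le_squashAt_iff hF hf hf')
    fun g _ => exists_le_iff_le_squashAt hF g

lemma ncard_image_squashAt (hF : NonSeparating F i) : (squashAt i '' F).ncard = F.ncard :=
  (Set.injOn_of_le_iff fun _ hf _ hf' => squashAt_le_squashAt_iff hF hf hf').ncard_image

end Squash

lemma nonSeparating_of_not_separating {t n : ℕ} {F : Set (Fin n → Fin t)} {i : Fin n}
    (hns : ¬ Separating F i) : NonSeparating F i := by
  intro f hf f' hf' h
  by_contra hlt
  exact hns ⟨f, hf, f', hf', fun hff' => hlt (hff' ▸ le_rfl), h, lt_of_not_ge hlt⟩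

theorem stmt12_general (t n : ℕ) (P : Type) [PartialOrder P]
    (F : Set (Fin n → Fin t)) (hsat : PSaturated P F)
    (i : Fin n) (hns : ¬ Separating F i) :
    ∃ F' : Set (Fin n → Fin t), PSaturated P F' ∧ F'.ncard = F.ncard ∧
      ∀ f ∈ F', (f i : ℕ) = 0 ∨ (f i : ℕ) = t - 1 := by
  have hF := nonSeparating_of_not_separating hns
  cases t with
  | zero => exact ⟨F, hsat, rfl, fun f _ => (f i).elim0⟩
  | succ k =>
    refine ⟨squashAt i '' F, hsat.image_squashAt hF, ncard_image_squashAt hF, ?_⟩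
    rintro _ ⟨f, -, rfl⟩
    rcases topOrBot_eq_bot_or_eq_top (f i) with h | h <;> simp [squashAt_apply_self, h, bot_eq_zero]

theorem stmt12 (t n : ℕ) (P : Type) [PartialOrder P] [Finite P]
    (F : Set (Fin n → Fin t)) (hsat : PSaturated P F)
    (i : Fin n) (hns : ¬ Separating F i) :
    ∃ F' : Set (Fin n → Fin t), PSaturated P F' ∧ F'.ncard = F.ncard ∧
      ∀ f ∈ F', (f i : ℕ) = 0 ∨ (f i : ℕ) = t - 1 :=
  stmt12_general t n P F hsat i hns
end

section
/- Let k ≥ 2, t ≥ 2, n > k, and let F ⊆ [t]^n be an induced A_k-free, induced A_k-saturated family, where A_k is the antichain on k elements. Then F is the union of at most k−1 maximal chains of [t]^n; in particular (t−1)n + 1 ≤ |F| ≤ (k−1)(t−1)n − k + 3. -/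
open Filter

/-!
By Dilworth's theorem a family without `k`-antichains is covered by `k - 1` disjoint chains
(Galvin's proof: remove a maximal element together with a chain below it chosen so that the width
drops, and induct). Saturation makes every `g ∉ F` incomparable to some
`(k - 1)`-antichain of `F`, and such an antichain meets every one of these chains; hence
extending each chain to a maximal chain never leaves `F`. Graded by the coordinate sum, the grid
has every maximal chain pass through each grade `0, …, (t - 1) n` exactly once, and all of them
share `⊥` and `⊤`, which gives both bounds.
-/

section Dilworth

variable {α : Type*} [PartialOrder α]

def WidthLE (S : Finset α) (k : ℕ) : Prop :=
  ∀ A ⊆ S, IsAntichain (· ≤ ·) (A : Set α) → A.card ≤ k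

def IsChainColoring (S : Finset α) (k : ℕ) (c : α → ℕ) : Prop :=
  (∀ x ∈ S, c x < k) ∧ ∀ x ∈ S, ∀ y ∈ S, c x = c y → x ≤ y ∨ y ≤ x

lemma WidthLE.mono {S T : Finset α} {k : ℕ} (h : WidthLE S k) (hTS : T ⊆ S) : WidthLE T k :=
  fun A hA => h A (hA.trans hTS)

lemma IsChainColoring.exists_mem_antichain {S A : Finset α} {k : ℕ} {c : α → ℕ}
    (hc : IsChainColoring S k c) (hAS : A ⊆ S) (hA : IsAntichain (· ≤ ·) (A : Set α))
    (hAk : A.card = k) {i : ℕ} (hi : i < k) : ∃ x ∈ A, c x = i := by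
  have hinj : Set.InjOn c A := fun x hx y hy hxy =>
    (hc.2 x (hAS hx) y (hAS hy) hxy).elim (hA.eq hx hy) (fun h => (hA.eq hy hx h).symm)
  have himage : A.image c = Finset.range k :=
    Finset.eq_of_subset_of_card_le
      (fun _ hm => by
        obtain ⟨x, hx, rfl⟩ := Finset.mem_image.1 hm
        exact Finset.mem_range.2 (hc.1 x (hAS hx)))
      (by rw [Finset.card_image_of_injOn hinj, hAk, Finset.card_range])
  have hmem : i ∈ A.image c := himage ▸ Finset.mem_range.2 hi
  simpa using hmem

lemma IsChainColoring.ite_of_isChain {S K : Finset α} {k : ℕ} {c : α → ℕ} [DecidableEq α]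
    (hc : IsChainColoring (S \ K) (k - 1) c) (hK : IsChain (· ≤ ·) (K : Set α)) (hk : 0 < k) :
    IsChainColoring S k (fun x => if x ∈ K then k - 1 else c x) := by
  refine ⟨fun x hx => ?_, fun x hx y hy hxy => ?_⟩
  · dsimp only
    split_ifs with hxK
    · omega
    · have := hc.1 x (Finset.mem_sdiff.2 ⟨hx, hxK⟩); omega
  · by_cases hxK : x ∈ K <;> by_cases hyK : y ∈ K <;> simp only [hxK, hyK, if_true, if_false] at hxy
    · exact hK.total hxK hyK
    · have := hc.1 y (Finset.mem_sdiff.2 ⟨hy, hyK⟩); omega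
    · have := hc.1 x (Finset.mem_sdiff.2 ⟨hx, hxK⟩); omega
    · exact hc.2 x (Finset.mem_sdiff.2 ⟨hx, hxK⟩) y (Finset.mem_sdiff.2 ⟨hy, hyK⟩) hxy

lemma IsChain.exists_isGreatest {s : Set α} (hs : IsChain (· ≤ ·) s) (hfin : s.Finite)
    (hne : s.Nonempty) : ∃ a, IsGreatest s a := by
  obtain ⟨a, ha⟩ := hfin.exists_maximal hne
  exact ⟨a, ha.1, fun x hx => (hs.total ha.1 hx).elim (ha.2 hx) id⟩

/-- `top i` is the greatest element of colour `i` lying in some `k`-antichain of `S`. -/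
lemma IsChainColoring.exists_antichain_above_maxAntichains {S : Finset α} {k : ℕ} {c : α → ℕ}
    (hc : IsChainColoring S k c)
    (hk : ∃ A ⊆ S, IsAntichain (· ≤ ·) (A : Set α) ∧ A.card = k) :
    ∃ top : Fin k → α, (∀ i, top i ∈ S ∧ c (top i) = i) ∧ (∀ i j, top i ≤ top j → i = j) ∧
      ∀ B ⊆ S, IsAntichain (· ≤ ·) (B : Set α) → B.card = k →
        ∀ y ∈ B, ∀ i : Fin k, c y = i → y ≤ top i := by
  set T : Set α := {x | ∃ A ⊆ S, IsAntichain (· ≤ ·) (A : Set α) ∧ A.card = k ∧ x ∈ A}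
  have hTS : ∀ x ∈ T, x ∈ S := fun x ⟨A, hA, _, _, hx⟩ => hA hx
  have hgreatest : ∀ i : Fin k, ∃ x, IsGreatest {y | y ∈ T ∧ c y = i} x := by
    intro i
    obtain ⟨A, hAS, hA, hAk⟩ := hk
    obtain ⟨x₀, hx₀, hcx₀⟩ := hc.exists_mem_antichain hAS hA hAk i.2
    refine IsChain.exists_isGreatest (fun x hx y hy _ => ?_)
      (S.finite_toSet.subset fun x hx => hTS x hx.1) ⟨x₀, ⟨A, hAS, hA, hAk, hx₀⟩, hcx₀⟩
    exact hc.2 x (hTS x hx.1) y (hTS y hy.1) (hx.2.trans hy.2.symm)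
  choose top htop using hgreatest
  refine ⟨top, fun i => ⟨hTS _ (htop i).1.1, (htop i).1.2⟩, fun i j hle => ?_,
    fun B hBS hB hBk y hy i hcy => (htop i).2 ⟨⟨B, hBS, hB, hBk, hy⟩, hcy⟩⟩
  by_contra hij
  obtain ⟨⟨B, hBS, hB, hBk, hjB⟩, hcj⟩ := (htop j).1
  obtain ⟨y, hyB, hcy⟩ := hc.exists_mem_antichain hBS hB hBk i.2
  have hyi : y ≤ top i := (htop i).2 ⟨⟨B, hBS, hB, hBk, hyB⟩, hcy⟩
  have hyj : y ≠ top j := fun h => hij (Fin.ext (hcy.symm.trans (h ▸ hcj)))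
  exact hB hyB hjB hyj (hyi.trans hle)

lemma exists_isChain_widthLE_sdiff [DecidableEq α] {S : Finset α} {k : ℕ} (hS : WidthLE S k)
    {a : α} (ha : Maximal (· ∈ S) a) {c : α → ℕ}
    (hc : IsChainColoring (S.erase a) k c) :
    ∃ K ⊆ S, a ∈ K ∧ IsChain (· ≤ ·) (K : Set α) ∧ WidthLE (S \ K) (k - 1) := by
  classical
  by_cases hbig : ∃ A ⊆ S.erase a, IsAntichain (· ≤ ·) (A : Set α) ∧ A.card = k
  swap
  · refine ⟨{a}, by simpa using ha.1, Finset.mem_singleton_self a, by simp, fun A hA hAanti => ?_⟩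
    rw [Finset.sdiff_singleton_eq_erase] at hA
    have := hS A (hA.trans (Finset.erase_subset a S)) hAanti
    by_contra hlt
    exact hbig ⟨A, hA, hAanti, by omega⟩
  obtain ⟨top, htopS, htop_anti, hbelow⟩ := hc.exists_antichain_above_maxAntichains hbig
  obtain ⟨i, hia⟩ : ∃ i, top i ≤ a := by
    by_contra! hno
    have htop_ne : ∀ i, top i ≠ a := fun i => Finset.ne_of_mem_erase (htopS i).1
    have hanti : IsAntichain (· ≤ ·) ((insert a (Finset.univ.image top) : Finset α) : Set α) := by
      simp only [Finset.coe_insert, Finset.coe_image, Finset.coe_univ, Set.image_univ]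
      refine IsAntichain.insert ?_ ?_ ?_
      · rintro _ ⟨i, rfl⟩ _ ⟨j, rfl⟩ hne hle
        exact hne (congrArg top (htop_anti i j hle))
      · rintro _ ⟨j, rfl⟩ _
        exact hno j
      · rintro _ ⟨j, rfl⟩ _ hle
        exact htop_ne j (ha.eq_of_ge (Finset.mem_of_mem_erase (htopS j).1) hle)
    have hcard := hS _ (Finset.insert_subset ha.1 fun x hx => by
      obtain ⟨j, -, rfl⟩ := Finset.mem_image.1 hx
      exact Finset.mem_of_mem_erase (htopS j).1) hanti
    rw [Finset.card_insert_of_notMem (by simpa using fun j => htop_ne j),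
      Finset.card_image_of_injective _ fun i j h => htop_anti i j h.le, Finset.card_univ,
      Fintype.card_fin] at hcard
    omega
  set K := insert a ((S.erase a).filter fun x => c x = i ∧ x ≤ top i)
  refine ⟨K, Finset.insert_subset ha.1 ((Finset.filter_subset _ _).trans (Finset.erase_subset a S)),
    Finset.mem_insert_self _ _, ?_, fun A hA hAanti => ?_⟩
  · rw [Finset.coe_insert]
    refine IsChain.insert (fun x hx y hy _ => ?_) fun x hx _ => ?_
    · obtain ⟨hxS, hcx, -⟩ := Finset.mem_filter.1 hx
      obtain ⟨hyS, hcy, -⟩ := Finset.mem_filter.1 hy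
      exact hc.2 x hxS y hyS (hcx.trans hcy.symm)
    · exact Or.inr ((Finset.mem_filter.1 hx).2.2.trans hia)
  have hAS : A ⊆ S.erase a := fun x hx => by
    obtain ⟨hxS, hxK⟩ := Finset.mem_sdiff.1 (hA hx)
    exact Finset.mem_erase.2 ⟨fun h => hxK (h ▸ Finset.mem_insert_self _ _), hxS⟩
  have := hS A (hAS.trans (Finset.erase_subset a S)) hAanti
  by_contra hlt
  obtain ⟨y, hyA, hcy⟩ := hc.exists_mem_antichain hAS hAanti (by omega) i.2
  have hyK : y ∈ K := Finset.mem_insert_of_mem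
    (Finset.mem_filter.2 ⟨hAS hyA, hcy, hbelow A hAS hAanti (by omega) y hyA i hcy⟩)
  exact (Finset.mem_sdiff.1 (hA hyA)).2 hyK

theorem exists_isChainColoring [DecidableEq α] (S : Finset α) (k : ℕ) (hS : WidthLE S k) :
    ∃ c, IsChainColoring S k c := by
  induction S using Finset.strongInduction generalizing k with
  | H S ih =>
  obtain rfl | hne := S.eq_empty_or_nonempty
  · exact ⟨0, by simp [IsChainColoring]⟩
  obtain ⟨a, ha⟩ := Finset.exists_maximal hne
  have hk : 0 < k := hS {a} (by simpa using ha.1) (by simp)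
  obtain ⟨c, hc⟩ := ih _ (Finset.erase_ssubset ha.1) k (hS.mono (Finset.erase_subset a S))
  obtain ⟨K, hKS, haK, hK, hwidth⟩ := exists_isChain_widthLE_sdiff hS ha hc
  obtain ⟨c', hc'⟩ := ih _ (Finset.sdiff_ssubset hKS ⟨a, haK⟩) (k - 1) hwidth
  exact ⟨_, hc'.ite_of_isChain hK hk⟩

end Dilworth

instance Pi.instGradeOrderFin {ι : Type*} [Fintype ι] {t : ℕ} : GradeOrder ℕ (ι → Fin t) where
  grade f := ∑ i, (f i : ℕ)
  grade_strictMono f g hfg := by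
    obtain ⟨hle, i, hi⟩ := Pi.lt_def.1 hfg
    exact Finset.sum_lt_sum (fun j _ => hle j) ⟨i, Finset.mem_univ i, hi⟩
  covBy_grade f g hfg := by
    classical
    obtain ⟨i, hi, hrest⟩ := Pi.covBy_iff.1 hfg
    rw [Nat.covBy_iff_add_one_eq, Fintype.sum_eq_add_sum_compl i, Fintype.sum_eq_add_sum_compl i,
      ← Nat.covBy_iff_add_one_eq.1 (Fin.covBy_iff.1 hi),
      Finset.sum_congr rfl fun j hj => congrArg Fin.val (hrest j (by simpa using hj))]
    ring

lemma grade_pi_fin {ι : Type*} [Fintype ι] {t : ℕ} (f : ι → Fin t) :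
    grade ℕ f = ∑ i, (f i : ℕ) := rfl

theorem IsMaxChain.ncard_eq {α : Type*} [PartialOrder α] [BoundedOrder α] [GradeOrder ℕ α]
    {s : Set α} (hs : IsMaxChain (· ≤ ·) s) :
    s.ncard = grade ℕ (⊤ : α) - grade ℕ (⊥ : α) + 1 := by
  classical
  let f := Flag.ofIsMaxChain s hs
  have hrange : Set.range (grade ℕ : f → ℕ) = Set.Icc (grade ℕ (⊥ : f)) (grade ℕ (⊤ : f)) := by
    refine (Set.range_subset_iff.2 fun x =>
      Set.mem_Icc.2 ⟨grade_mono bot_le, grade_mono le_top⟩).antisymm ?_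
    rintro m ⟨hbot, htop⟩
    induction m, hbot using Nat.le_induction with
    | base => exact ⟨⊥, rfl⟩
    | succ m _ ih =>
      obtain ⟨x, rfl⟩ := ih (by omega)
      have hx : ¬IsMax x := fun hx => by
        simp only [hx.eq_top] at htop; omega
      obtain ⟨y, hxy⟩ := exists_covBy_of_wellFoundedLT hx
      exact ⟨y, (Nat.covBy_iff_add_one_eq.1 (hxy.grade ℕ)).symm⟩
  rw [← Nat.card_coe_set_eq]
  change Nat.card f = _
  rw [← Nat.card_range_of_injective (grade_injective (𝕆 := ℕ) (α := f)), hrange,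
    ← Finset.coe_Icc, Nat.card_coe_set_eq, Set.ncard_coe_finset, Nat.card_Icc]
  exact Nat.sub_add_comm (grade_mono (bot_le : (⊥ : f) ≤ ⊤))

theorem grade_bot_pi_fin {ι : Type*} [Fintype ι] {s : ℕ} : grade ℕ (⊥ : ι → Fin (s + 1)) = 0 := by
  simp [grade_pi_fin, bot_eq_zero]

theorem grade_top_pi_fin {ι : Type*} [Fintype ι] {s : ℕ} :
    grade ℕ (⊤ : ι → Fin (s + 1)) = Fintype.card ι * s := by
  simp [grade_pi_fin]

lemma ncard_iUnion_le_of_forall_subset {α ι : Type*} [Finite α] [Fintype ι] {C : ι → Set α}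
    {B : Set α} (hB : ∀ j, B ⊆ C j) :
    (⋃ j, C j).ncard ≤ B.ncard + ∑ j, ((C j).ncard - B.ncard) :=
  calc (⋃ j, C j).ncard ≤ (B ∪ ⋃ j, (C j \ B)).ncard :=
        Set.ncard_le_ncard (Set.iUnion_subset fun j x hx =>
          (em (x ∈ B)).elim Or.inl fun h => Or.inr (Set.mem_iUnion.2 ⟨j, hx, h⟩))
    _ ≤ B.ncard + (⋃ j, (C j \ B)).ncard := Set.ncard_union_le _ _
    _ ≤ B.ncard + ∑ j, (C j \ B).ncard := by
        gcongr
        simpa using Finset.set_ncard_biUnion_le Finset.univ fun j => C j \ B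
    _ = B.ncard + ∑ j, ((C j).ncard - B.ncard) := by simp only [Set.ncard_sdiff (hB _)]

section Saturation

variable {α : Type} [PartialOrder α] {k : ℕ} {F : Set α}

theorem inducedCopy_AC_iff : InducedCopy (AC k) F ↔
    ∃ A : Finset α, ↑A ⊆ F ∧ IsAntichain (· ≤ ·) (A : Set α) ∧ A.card = k := by
  classical
  constructor
  · rintro ⟨φ, hφ, hφF, hφle⟩
    let _ : Fintype (AC k) := inferInstanceAs (Fintype (Fin k))
    refine ⟨Finset.univ.image φ, ?_, ?_, ?_⟩
    · simpa [Set.range_subset_iff] using hφF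
    · simp only [Finset.coe_image, Finset.coe_univ, Set.image_univ]
      rintro _ ⟨i, rfl⟩ _ ⟨j, rfl⟩ hne hle
      exact hne (congrArg φ ((hφle i j).1 hle))
    · rw [Finset.card_image_of_injective _ hφ, Finset.card_univ]
      exact Fintype.card_fin k
  · rintro ⟨A, hAF, hA, hAk⟩
    let e := A.equivFinOfCardEq hAk
    refine ⟨fun i => (e.symm i : α), Subtype.val_injective.comp e.symm.injective,
      fun i => hAF (e.symm i).2, fun i j => ⟨fun hle => ?_, fun hij => ?_⟩⟩
    · by_contra hij
      exact hA (e.symm i).2 (e.symm j).2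
        (fun h => hij (e.symm.injective (Subtype.ext h))) hle
    · change i = j at hij
      rw [hij]

lemma PFree.card_lt (h : PFree (AC k) F) {A : Finset α} (hAF : ↑A ⊆ F)
    (hA : IsAntichain (· ≤ ·) (A : Set α)) : A.card < k := by
  by_contra! hle
  obtain ⟨B, hBA, hBk⟩ := Finset.exists_subset_card_eq hle
  exact h (inducedCopy_AC_iff.2 ⟨B, (Finset.coe_subset.2 hBA).trans hAF,
    hA.subset (Finset.coe_subset.2 hBA), hBk⟩)

lemma PSaturated.exists_antichain_incomparable (h : PSaturated (AC k) F) {g : α} (hg : g ∉ F) :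
    ∃ A : Finset α, ↑A ⊆ F ∧ IsAntichain (· ≤ ·) (A : Set α) ∧ A.card = k - 1 ∧
      ∀ x ∈ A, ¬x ≤ g ∧ ¬g ≤ x := by
  classical
  obtain ⟨A, hAF, hA, hAk⟩ := inducedCopy_AC_iff.1 (h.2 g hg)
  have hgA : g ∈ A := by
    by_contra hgA
    exact (h.1.card_lt (fun x hx => (hAF hx).resolve_left fun e => hgA (e ▸ hx)) hA).ne hAk
  refine ⟨A.erase g, fun x hx => ?_, hA.subset (by simp), by rw [Finset.card_erase_of_mem hgA, hAk],
    fun x hx => ?_⟩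
  · obtain ⟨hxg, hxA⟩ := Finset.mem_erase.1 hx
    exact (hAF hxA).resolve_left hxg
  · obtain ⟨hxg, hxA⟩ := Finset.mem_erase.1 hx
    exact ⟨hA hxA hgA hxg, hA hgA hxA (Ne.symm hxg)⟩

theorem PSaturated.exists_isMaxChain_eq_iUnion (hF : F.Finite) (h : PSaturated (AC k) F) :
    ∃ C : Fin (k - 1) → Set α, (∀ j, IsMaxChain (· ≤ ·) (C j)) ∧ F = ⋃ j, C j := by
  classical
  obtain ⟨c, hc⟩ := exists_isChainColoring hF.toFinset (k - 1) fun A hA hAanti =>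
    Nat.le_sub_one_of_lt (h.1.card_lt (Set.Finite.subset_toFinset.1 hA) hAanti)
  let D : Fin (k - 1) → Set α := fun j => {x | x ∈ F ∧ c x = j}
  have hD : ∀ j, IsChain (· ≤ ·) (D j) := fun j x hx y hy _ =>
    hc.2 x (hF.mem_toFinset.2 hx.1) y (hF.mem_toFinset.2 hy.1) (hx.2.trans hy.2.symm)
  choose C hC hDC using fun j => (hD j).exists_maxChain
  refine ⟨C, hC, subset_antisymm (fun x hx => ?_) (Set.iUnion_subset fun j g hg => ?_)⟩
  · exact Set.mem_iUnion.2 ⟨⟨c x, hc.1 x (hF.mem_toFinset.2 hx)⟩, hDC _ ⟨hx, rfl⟩⟩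
  · by_contra hgF
    obtain ⟨A, hAF, hA, hAk, hinc⟩ := h.exists_antichain_incomparable hgF
    obtain ⟨x, hxA, hcx⟩ := hc.exists_mem_antichain (Set.Finite.subset_toFinset.2 hAF) hA hAk j.2
    exact ((hC j).isChain.total (hDC j ⟨hAF hxA, hcx⟩) hg).elim (hinc x hxA).1 (hinc x hxA).2

end Saturation

theorem stmt19 (t k n : ℕ) (ht : 2 ≤ t) (hk : 2 ≤ k) (hn : k < n)
    (F : Set (Fin n → Fin t)) (hsat : PSaturated (AC k) F) :
    (∃ C : Fin (k - 1) → Set (Fin n → Fin t),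
      (∀ j, IsMaxChain (· ≤ ·) (C j)) ∧ F = ⋃ j, C j) ∧
    (t - 1) * n + 1 ≤ F.ncard ∧ F.ncard ≤ (k - 1) * ((t - 1) * n) - k + 3 := by
  obtain ⟨s, rfl⟩ : ∃ s, t = s + 1 := ⟨t - 1, by omega⟩
  obtain ⟨C, hC, rfl⟩ := hsat.exists_isMaxChain_eq_iUnion (Set.toFinite F)
  have hcard : ∀ j, (C j).ncard = s * n + 1 := fun j => by
    rw [(hC j).ncard_eq, grade_top_pi_fin, grade_bot_pi_fin, Fintype.card_fin, Nat.mul_comm]; rfl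
  rw [Nat.add_sub_cancel]
  refine ⟨⟨C, hC, rfl⟩, ?_, ?_⟩
  · exact hcard ⟨0, by omega⟩ ▸ Set.ncard_le_ncard (Set.subset_iUnion C _) (Set.toFinite _)
  · have : Nonempty (Fin n) := ⟨⟨0, by omega⟩⟩
    have : Nontrivial (Fin (s + 1)) := Fin.nontrivial_iff_two_le.2 ht
    have hunion := ncard_iUnion_le_of_forall_subset (C := C) (B := {⊥, ⊤}) fun j =>
      Set.insert_subset (hC j).bot_mem (Set.singleton_subset_iff.2 (hC j).top_mem)
    have hsn : 1 ≤ s * n := Nat.one_le_iff_ne_zero.2 (Nat.mul_ne_zero (by omega) (by omega))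
    have hk1 : k - 1 ≤ (k - 1) * (s * n) := Nat.le_mul_of_pos_right _ hsn
    rw [Set.ncard_pair bot_ne_top] at hunion
    simp only [hcard, Finset.sum_const, Finset.card_univ, Fintype.card_fin, smul_eq_mul,
      show s * n + 1 - 2 = s * n - 1 by omega, Nat.mul_sub_one] at hunion
    omega
end
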